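/- Let w ∈ A_1 and let M be the Hardy–Littlewood maximal operator. Then there exists a constant C > 0, independent of f, a, and r, such that for every a ∈ ℝⁿ, r > 0, and f ∈ L^{1,w}_loc: ‖Mf‖_{WL^{1,w}(B(a,r))} ≤ C·w(B(a,r))·∫_r^∞ w(B(a,s))^{-1} ‖f‖_{L^{1,w}(B(a,s))} ds/s. -/

import Mathlib

open MeasureTheory Metric Set
open scoped ENNReal

noncomputable section

/-- The weighted measure of a set: `w(E) = ∫_E w(x) dx`, valued in `ℝ≥0∞`. -/
def wSet {n : ℕ} (w : EuclideanSpace ℝ (Fin n) → ℝ)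
    (E : Set (EuclideanSpace ℝ (Fin n))) : ℝ≥0∞ :=
  ∫⁻ x in E, ENNReal.ofReal (w x)

/-- The weighted Lebesgue norm `‖f‖_{L^{p,w}(Ω)} = (∫_Ω |f(x)|^p w(x) dx)^{1/p}`. -/
def wLp {n : ℕ} (p : ℝ) (w f : EuclideanSpace ℝ (Fin n) → ℝ)
    (Ω : Set (EuclideanSpace ℝ (Fin n))) : ℝ≥0∞ :=
  (∫⁻ x in Ω, ENNReal.ofReal |f x| ^ p * ENNReal.ofReal (w x)) ^ (1 / p)

/-- The weighted Lebesgue norm for an `ℝ≥0∞`-valued function. -/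
def wLpE {n : ℕ} (p : ℝ) (w : EuclideanSpace ℝ (Fin n) → ℝ)
    (g : EuclideanSpace ℝ (Fin n) → ℝ≥0∞) (Ω : Set (EuclideanSpace ℝ (Fin n))) : ℝ≥0∞ :=
  (∫⁻ x in Ω, g x ^ p * ENNReal.ofReal (w x)) ^ (1 / p)

/-- The weak weighted Lebesgue norm `‖f‖_{WL^{p,w}(Ω)} = sup_{γ>0} γ·w({x ∈ Ω : |f(x)| > γ})^{1/p}`. -/
def wWeakLp {n : ℕ} (p : ℝ) (w f : EuclideanSpace ℝ (Fin n) → ℝ)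
    (Ω : Set (EuclideanSpace ℝ (Fin n))) : ℝ≥0∞ :=
  ⨆ γ : Set.Ioi (0 : ℝ),
    ENNReal.ofReal γ.1 * (wSet w {x | x ∈ Ω ∧ γ.1 < |f x|}) ^ (1 / p)

/-- The weak weighted Lebesgue norm for an `ℝ≥0∞`-valued function. -/
def wWeakLpE {n : ℕ} (p : ℝ) (w : EuclideanSpace ℝ (Fin n) → ℝ)
    (g : EuclideanSpace ℝ (Fin n) → ℝ≥0∞) (Ω : Set (EuclideanSpace ℝ (Fin n))) : ℝ≥0∞ :=
  ⨆ γ : Set.Ioi (0 : ℝ),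
    ENNReal.ofReal γ.1 * (wSet w {x | x ∈ Ω ∧ ENNReal.ofReal γ.1 < g x}) ^ (1 / p)

/-- `f ∈ L^{p,w}_loc`: `f` is measurable and `‖f‖_{L^{p,w}(B)} < ∞` on every ball. -/
def MemLocWLp {n : ℕ} (p : ℝ) (w f : EuclideanSpace ℝ (Fin n) → ℝ) : Prop :=
  Measurable f ∧ ∀ (a : EuclideanSpace ℝ (Fin n)) (r : ℝ), 0 < r → wLp p w f (ball a r) < ⊤

/-- A weight: nonnegative, measurable, locally integrable, positive a.e. -/
def IsWeight {n : ℕ} (w : EuclideanSpace ℝ (Fin n) → ℝ) : Prop :=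
  Measurable w ∧ (∀ x, 0 ≤ w x) ∧ LocallyIntegrable w volume ∧ ∀ᵐ x ∂volume, 0 < w x

/-- The Muckenhoupt class `A_p` for `1 < p`. -/
def MuckAp {n : ℕ} (p : ℝ) (w : EuclideanSpace ℝ (Fin n) → ℝ) : Prop :=
  ∃ C : ℝ, 0 < C ∧ ∀ (a : EuclideanSpace ℝ (Fin n)) (r : ℝ), 0 < r →
    ((volume (ball a r))⁻¹ * ∫⁻ x in ball a r, ENNReal.ofReal (w x)) *
      ((volume (ball a r))⁻¹ *
        ∫⁻ x in ball a r, ENNReal.ofReal (w x ^ (-(1 / (p - 1))))) ^ (p - 1) ≤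
      ENNReal.ofReal C

/-- The Muckenhoupt class `A_1`. -/
def MuckA1 {n : ℕ} (w : EuclideanSpace ℝ (Fin n) → ℝ) : Prop :=
  ∃ C : ℝ, 0 < C ∧ ∀ (a : EuclideanSpace ℝ (Fin n)) (r : ℝ), 0 < r →
    ((volume (ball a r))⁻¹ * ∫⁻ x in ball a r, ENNReal.ofReal (w x)) *
      essSup (fun x => ENNReal.ofReal (w x)⁻¹) (volume.restrict (ball a r)) ≤
      ENNReal.ofReal C

/-- The class `A_{p,q}` for `1 < p`, where `p'` is the conjugate exponent of `p`. -/
def MuckApq {n : ℕ} (p q p' : ℝ) (w : EuclideanSpace ℝ (Fin n) → ℝ) : Prop :=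
  ∃ C : ℝ, 0 < C ∧ ∀ (a : EuclideanSpace ℝ (Fin n)) (r : ℝ), 0 < r →
    ((volume (ball a r))⁻¹ * ∫⁻ x in ball a r, ENNReal.ofReal (w x ^ q)) ^ (1 / q) *
      ((volume (ball a r))⁻¹ * ∫⁻ x in ball a r, ENNReal.ofReal (w x ^ (-p'))) ^ (1 / p') ≤
      ENNReal.ofReal C

/-- The class `A_{1,q}`. -/
def MuckA1q {n : ℕ} (q : ℝ) (w : EuclideanSpace ℝ (Fin n) → ℝ) : Prop :=
  ∃ C : ℝ, 0 < C ∧ ∀ (a : EuclideanSpace ℝ (Fin n)) (r : ℝ), 0 < r →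
    ((volume (ball a r))⁻¹ * ∫⁻ x in ball a r, ENNReal.ofReal (w x ^ q)) ^ (1 / q) *
      essSup (fun x => ENNReal.ofReal (w x)⁻¹) (volume.restrict (ball a r)) ≤
      ENNReal.ofReal C

/-- The Hardy–Littlewood maximal operator. -/
def HLMax {n : ℕ} (f : EuclideanSpace ℝ (Fin n) → ℝ)
    (x : EuclideanSpace ℝ (Fin n)) : ℝ≥0∞ :=
  ⨆ r : Set.Ioi (0 : ℝ), (volume (ball x r.1))⁻¹ * ∫⁻ y in ball x r.1, ENNReal.ofReal |f y|

/-- The fractional integral operator `I_α` (applied to `|f|`, valued in `ℝ≥0∞`). -/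
def fracIntE {n : ℕ} (α : ℝ) (f : EuclideanSpace ℝ (Fin n) → ℝ)
    (x : EuclideanSpace ℝ (Fin n)) : ℝ≥0∞ :=
  ∫⁻ y, ENNReal.ofReal |f y| / ENNReal.ofReal (dist x y ^ ((n : ℝ) - α))

/-- The fractional maximal operator `M_α`. -/
def fracMax {n : ℕ} (α : ℝ) (f : EuclideanSpace ℝ (Fin n) → ℝ)
    (x : EuclideanSpace ℝ (Fin n)) : ℝ≥0∞ :=
  ⨆ r : Set.Ioi (0 : ℝ),
    (volume (ball x r.1)) ^ (α / (n : ℝ) - 1) * ∫⁻ y in ball x r.1, ENNReal.ofReal |f y|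

/-- The generalized weighted Morrey norm `‖f‖_{M^{p,w}_ψ}`. -/
def morreyNorm {n : ℕ} (p : ℝ) (w : EuclideanSpace ℝ (Fin n) → ℝ)
    (ψ : EuclideanSpace ℝ (Fin n) → ℝ → ℝ) (f : EuclideanSpace ℝ (Fin n) → ℝ) : ℝ≥0∞ :=
  ⨆ (a : EuclideanSpace ℝ (Fin n)) (r : Set.Ioi (0 : ℝ)),
    (ENNReal.ofReal (ψ a r.1))⁻¹ * wSet w (ball a r.1) ^ (-(1 / p)) * wLp p w f (ball a r.1)

/-- The generalized weighted Morrey norm for an `ℝ≥0∞`-valued function. -/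
def morreyNormE {n : ℕ} (p : ℝ) (w : EuclideanSpace ℝ (Fin n) → ℝ)
    (ψ : EuclideanSpace ℝ (Fin n) → ℝ → ℝ) (g : EuclideanSpace ℝ (Fin n) → ℝ≥0∞) : ℝ≥0∞ :=
  ⨆ (a : EuclideanSpace ℝ (Fin n)) (r : Set.Ioi (0 : ℝ)),
    (ENNReal.ofReal (ψ a r.1))⁻¹ * wSet w (ball a r.1) ^ (-(1 / p)) * wLpE p w g (ball a r.1)

/-- The generalized weighted weak Morrey norm `‖f‖_{WM^{p,w}_ψ}`. -/
def morreyWeakNorm {n : ℕ} (p : ℝ) (w : EuclideanSpace ℝ (Fin n) → ℝ)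
    (ψ : EuclideanSpace ℝ (Fin n) → ℝ → ℝ) (f : EuclideanSpace ℝ (Fin n) → ℝ) : ℝ≥0∞ :=
  ⨆ (a : EuclideanSpace ℝ (Fin n)) (r : Set.Ioi (0 : ℝ)),
    (ENNReal.ofReal (ψ a r.1))⁻¹ * wSet w (ball a r.1) ^ (-(1 / p)) * wWeakLp p w f (ball a r.1)

/-- The generalized weighted weak Morrey norm for an `ℝ≥0∞`-valued function. -/
def morreyWeakNormE {n : ℕ} (p : ℝ) (w : EuclideanSpace ℝ (Fin n) → ℝ)
    (ψ : EuclideanSpace ℝ (Fin n) → ℝ → ℝ) (g : EuclideanSpace ℝ (Fin n) → ℝ≥0∞) : ℝ≥0∞ :=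
  ⨆ (a : EuclideanSpace ℝ (Fin n)) (r : Set.Ioi (0 : ℝ)),
    (ENNReal.ofReal (ψ a r.1))⁻¹ * wSet w (ball a r.1) ^ (-(1 / p)) * wWeakLpE p w g (ball a r.1)

end

/-!
Split `f = f₁ + f₂` with `f₁ = f·1_{B(a,2r)}`. Since `w ∈ A₁`, every ball `B` satisfies
`|B|⁻¹ ∫_B g ≤ C w(B)⁻¹ ∫_B g w`; applied to indicators of sub-balls, this makes `w dx`
doubling.

For `f₁`, a Vitali covering argument (radii truncated at `N`, then `N → ∞`) gives the weighted
weak type (1,1) bound `γ w{Mf₁ > γ} ≤ C' ∫ |f₁| w`. On `(2r, 4r)` the integrand of the tail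
integral dominates `w(B(a,4r))⁻¹ ∫_{B(a,2r)} |f| w / (4r)`, so `∫_{B(a,2r)} |f| w` is at most
`2 w(B(a,4r))` times the tail, and doubling replaces `w(B(a,4r))` by `w(B(a,r))`.

For `f₂` and `x ∈ B(a,r)`, only balls `B(x,t)` with `t > r` meet the support of `f₂`, and they
lie in `B(a,2t)`; the `A₁` inequality and doubling bound their averages by a multiple of
`w(B(a,4t))⁻¹ ∫_{B(a,2t)} |f| w`, hence of the tail integral. So `Mf₂` is bounded on
`B(a,r)`, and its weak norm there is at most this bound times `w(B(a,r))`.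
-/

theorem ENNReal.inv_le_mul_inv_of_le_mul {a b c : ℝ≥0∞} (hc₀ : c ≠ 0) (hc : c ≠ ∞)
    (h : a ≤ c * b) : b⁻¹ ≤ c * a⁻¹ :=
  calc b⁻¹ ≤ (c⁻¹ * a)⁻¹ := ENNReal.inv_le_inv.2 ((ENNReal.inv_mul_le_iff hc₀ hc).2 h)
    _ = c * a⁻¹ := by
      rw [ENNReal.mul_inv (Or.inl (ENNReal.inv_ne_zero.2 hc)) (Or.inl (ENNReal.inv_ne_top.2 hc₀)),
        inv_inv]

theorem setLIntegral_le_mul_essSup_inv {α : Type*} [MeasurableSpace α] {μ : Measure α}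
    {w : α → ℝ} {g : α → ℝ≥0∞} (hw : Measurable w) (hg : Measurable g) (s : Set α)
    (hpos : ∀ᵐ x ∂μ.restrict s, 0 < w x) :
    ∫⁻ x in s, g x ∂μ ≤ (∫⁻ x in s, g x * ENNReal.ofReal (w x) ∂μ) *
      essSup (fun x => ENNReal.ofReal (w x)⁻¹) (μ.restrict s) := by
  have hgw : Measurable fun x => g x * ENNReal.ofReal (w x) := hg.mul hw.ennreal_ofReal
  rw [← lintegral_mul_const _ hgw]
  refine lintegral_mono_ae ?_
  filter_upwards [ENNReal.ae_le_essSup (fun x => ENNReal.ofReal (w x)⁻¹), hpos] with x hS hx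
  calc g x = g x * (ENNReal.ofReal (w x) * ENNReal.ofReal (w x)⁻¹) := by
        rw [← ENNReal.ofReal_mul hx.le, mul_inv_cancel₀ hx.ne', ENNReal.ofReal_one, mul_one]
    _ ≤ _ := by rw [← mul_assoc]; gcongr

theorem exists_countable_disjoint_balls_cover {α : Type*} [PseudoMetricSpace α]
    [TopologicalSpace.SeparableSpace α] (S : Set α) (ρ : α → ℝ) (R : ℝ)
    (hρ : ∀ x ∈ S, 0 < ρ x ∧ ρ x ≤ R) :
    ∃ u ⊆ S, u.Countable ∧ u.PairwiseDisjoint (fun x => ball x (ρ x)) ∧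
      S ⊆ ⋃ x ∈ u, ball x (5 * ρ x) := by
  obtain ⟨u, huS, hdisj, hcover⟩ :=
    Vitali.exists_disjoint_subfamily_covering_enlargement_closedBall S id ρ R
      (fun x hx => (hρ x hx).2) 4 (by norm_num)
  have hdisj' : u.PairwiseDisjoint (fun x => ball x (ρ x)) :=
    hdisj.mono fun x => ball_subset_closedBall
  refine ⟨u, huS, hdisj'.countable_of_isOpen (fun _ _ => isOpen_ball)
    (fun x hx => nonempty_ball.2 (hρ x (huS hx)).1), hdisj', fun x hx => ?_⟩
  obtain ⟨b, hb, hsub⟩ := hcover x hx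
  exact mem_biUnion hb (closedBall_subset_ball (by linarith [(hρ b (huS hb)).1])
    (hsub (mem_closedBall_self (hρ x hx).1.le)))

theorem le_two_mul_setLIntegral_Ioi_mul_inv {φ : ℝ → ℝ≥0∞} {c : ℝ≥0∞} {r u : ℝ}
    (hu : 0 < u) (hru : r ≤ u) (h : ∀ s ∈ Ioo u (2 * u), c ≤ φ s) :
    c ≤ 2 * ∫⁻ s in Ioi r, φ s * ENNReal.ofReal s⁻¹ := by
  have hmass : ENNReal.ofReal (2 * u)⁻¹ * volume (Ioo u (2 * u)) = 2⁻¹ := by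
    rw [Real.volume_Ioo, ← ENNReal.ofReal_mul (by positivity),
      show (2 * u)⁻¹ * (2 * u - u) = 2⁻¹ by field_simp; ring,
      ENNReal.ofReal_inv_of_pos two_pos, ENNReal.ofReal_ofNat]
  calc c = 2 * (c * 2⁻¹) := by
        rw [mul_comm c, ← mul_assoc, ENNReal.mul_inv_cancel two_ne_zero ENNReal.ofNat_ne_top,
          one_mul]
    _ = 2 * ∫⁻ _ in Ioo u (2 * u), c * ENNReal.ofReal (2 * u)⁻¹ := by
        rw [setLIntegral_const, mul_assoc, hmass]
    _ ≤ 2 * ∫⁻ s in Ioo u (2 * u), φ s * ENNReal.ofReal s⁻¹ := by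
        gcongr 2 * ?_
        refine setLIntegral_mono' measurableSet_Ioo fun s hs => ?_
        gcongr
        · exact h s hs
        · exact hu.trans hs.1
        · exact hs.2.le
    _ ≤ 2 * ∫⁻ s in Ioi r, φ s * ENNReal.ofReal s⁻¹ := by
        gcongr 2 * ?_
        exact lintegral_mono_set fun s hs => hru.trans_lt hs.1

section Weighted

variable {n : ℕ}

local notation "ℝⁿ" => EuclideanSpace ℝ (Fin n)

variable {w : EuclideanSpace ℝ (Fin n) → ℝ} {C : ℝ}

noncomputable def weightedTail (w f : ℝⁿ → ℝ) (a : ℝⁿ) (r : ℝ) : ℝ≥0∞ :=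
  ∫⁻ s in Ioi r, (wSet w (ball a s))⁻¹ * wLp 1 w f (ball a s) * ENNReal.ofReal s⁻¹

theorem wLp_one (f : ℝⁿ → ℝ) (Ω : Set ℝⁿ) :
    wLp 1 w f Ω = ∫⁻ x in Ω, ENNReal.ofReal |f x| * ENNReal.ofReal (w x) := by
  simp [wLp]

theorem inv_wSet_mul_setLIntegral_le_weightedTail (f : ℝⁿ → ℝ) (a : ℝⁿ) {r u : ℝ}
    (hu : 0 < u) (hru : r ≤ u) :
    (wSet w (ball a (2 * u)))⁻¹ *
        ∫⁻ y in ball a u, ENNReal.ofReal |f y| * ENNReal.ofReal (w y) ≤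
      2 * weightedTail w f a r :=
  le_two_mul_setLIntegral_Ioi_mul_inv hu hru fun s hs => by
    rw [wLp_one]
    gcongr ?_ * ?_
    · exact ENNReal.inv_le_inv.2 (lintegral_mono_set (ball_subset_ball hs.2.le))
    · exact lintegral_mono_set (ball_subset_ball hs.1.le)

theorem IsWeight.wSet_ball_pos (hw : IsWeight w) (a : ℝⁿ) {r : ℝ} (hr : 0 < r) :
    0 < wSet w (ball a r) := by
  rw [wSet, setLIntegral_pos_iff hw.1.ennreal_ofReal, inter_comm, measure_inter_conull]
  · exact measure_ball_pos volume a hr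
  · refine mem_ae_iff.1 ?_
    filter_upwards [hw.2.2.2] with x hx
    simpa using hx

theorem IsWeight.wSet_ball_ne_top (hw : IsWeight w) (a : ℝⁿ) (r : ℝ) :
    wSet w (ball a r) ≠ ∞ :=
  ((hw.2.2.1.integrableOn_isCompact (isCompact_closedBall a r)).mono_set
    ball_subset_closedBall).setLIntegral_lt_top.ne

theorem wWeakLpE_one_le {g : ℝⁿ → ℝ≥0∞} {Ω : Set ℝⁿ} {X : ℝ≥0∞}
    (h : ∀ γ : ℝ, 0 < γ →
      ENNReal.ofReal γ * wSet w {x | x ∈ Ω ∧ ENNReal.ofReal γ < g x} ≤ X) :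
    wWeakLpE 1 w g Ω ≤ X :=
  iSup_le fun γ => by simpa using h γ γ.2

theorem le_wWeakLpE_one (g : ℝⁿ → ℝ≥0∞) (Ω : Set ℝⁿ) {γ : ℝ} (hγ : 0 < γ) :
    ENNReal.ofReal γ * wSet w {x | x ∈ Ω ∧ ENNReal.ofReal γ < g x} ≤
      wWeakLpE 1 w g Ω := by
  simpa [wWeakLpE] using le_iSup (fun γ : Ioi (0 : ℝ) =>
    ENNReal.ofReal γ.1 * wSet w {x | x ∈ Ω ∧ ENNReal.ofReal γ.1 < g x} ^ (1 / (1 : ℝ)))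
    ⟨γ, hγ⟩

theorem wWeakLpE_one_le_of_forall_le {g : ℝⁿ → ℝ≥0∞} {Ω : Set ℝⁿ} {c : ℝ≥0∞}
    (h : ∀ x ∈ Ω, g x ≤ c) :
    wWeakLpE 1 w g Ω ≤ c * wSet w Ω := by
  refine wWeakLpE_one_le fun γ _ => ?_
  rcases eq_empty_or_nonempty {x | x ∈ Ω ∧ ENNReal.ofReal γ < g x} with hE | ⟨x, hxΩ, hx⟩
  · simp [hE, wSet]
  · gcongr
    · exact hx.le.trans (h x hxΩ)
    · exact lintegral_mono_set fun y hy => hy.1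

theorem wWeakLpE_one_le_two_mul_add {g g₁ g₂ : ℝⁿ → ℝ≥0∞} {Ω : Set ℝⁿ}
    (h : ∀ x ∈ Ω, g x ≤ g₁ x + g₂ x) :
    wWeakLpE 1 w g Ω ≤ 2 * (wWeakLpE 1 w g₁ Ω + wWeakLpE 1 w g₂ Ω) := by
  refine wWeakLpE_one_le fun γ hγ => ?_
  set δ := ENNReal.ofReal (γ / 2)
  have hhalf : ENNReal.ofReal γ = δ + δ := by
    rw [← ENNReal.ofReal_add (by positivity) (by positivity), add_halves]
  have hsub : {x | x ∈ Ω ∧ ENNReal.ofReal γ < g x} ⊆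
      {x | x ∈ Ω ∧ δ < g₁ x} ∪ {x | x ∈ Ω ∧ δ < g₂ x} := by
    rintro x ⟨hxΩ, hx⟩
    by_contra hc
    simp only [mem_union, not_or] at hc
    have h₁ : g₁ x ≤ δ := not_lt.1 fun h => hc.1 ⟨hxΩ, h⟩
    have h₂ : g₂ x ≤ δ := not_lt.1 fun h => hc.2 ⟨hxΩ, h⟩
    exact (hx.trans_le (h x hxΩ)).not_ge (hhalf ▸ add_le_add h₁ h₂)
  calc ENNReal.ofReal γ * wSet w {x | x ∈ Ω ∧ ENNReal.ofReal γ < g x}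
      ≤ 2 * δ * (wSet w {x | x ∈ Ω ∧ δ < g₁ x} +
          wSet w {x | x ∈ Ω ∧ δ < g₂ x}) :=
        mul_le_mul' (by rw [hhalf, two_mul])
          ((lintegral_mono_set hsub).trans (lintegral_union_le _ _ _))
    _ = 2 * (δ * wSet w {x | x ∈ Ω ∧ δ < g₁ x} +
          δ * wSet w {x | x ∈ Ω ∧ δ < g₂ x}) := by
        ring
    _ ≤ 2 * (wWeakLpE 1 w g₁ Ω + wWeakLpE 1 w g₂ Ω) := by
        gcongr <;> exact le_wWeakLpE_one _ _ (by positivity)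

theorem HLMax_add_le {f₁ f₂ : ℝⁿ → ℝ} (hf₁ : Measurable f₁) (x : ℝⁿ) :
    HLMax (f₁ + f₂) x ≤ HLMax f₁ x + HLMax f₂ x := by
  refine iSup_le fun t => ?_
  calc (volume (ball x t.1))⁻¹ * ∫⁻ y in ball x t.1, ENNReal.ofReal |(f₁ + f₂) y|
      ≤ (volume (ball x t.1))⁻¹ * ((∫⁻ y in ball x t.1, ENNReal.ofReal |f₁ y|) +
          ∫⁻ y in ball x t.1, ENNReal.ofReal |f₂ y|) := by
        gcongr
        rw [← lintegral_add_left hf₁.abs.ennreal_ofReal]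
        exact lintegral_mono fun y =>
          (ENNReal.ofReal_le_ofReal (abs_add_le _ _)).trans ENNReal.ofReal_add_le
    _ ≤ HLMax f₁ x + HLMax f₂ x := by
        rw [mul_add]
        exact add_le_add (le_iSup (fun t : Ioi (0 : ℝ) => (volume (ball x t.1))⁻¹ *
          ∫⁻ y in ball x t.1, ENNReal.ofReal |f₁ y|) t) (le_iSup (fun t : Ioi (0 : ℝ) =>
            (volume (ball x t.1))⁻¹ * ∫⁻ y in ball x t.1, ENNReal.ofReal |f₂ y|) t)

theorem setOf_lt_HLMax_subset_iUnion (f : ℝⁿ → ℝ) (γ : ℝ) :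
    {x | ENNReal.ofReal γ < HLMax f x} ⊆ ⋃ N : ℕ, {x | ∃ t : ℝ, 0 < t ∧ t ≤ N ∧
      ENNReal.ofReal γ * volume (ball x t) < ∫⁻ y in ball x t, ENNReal.ofReal |f y|} := by
  intro x (hx : ENNReal.ofReal γ < HLMax f x)
  rw [HLMax, lt_iSup_iff] at hx
  obtain ⟨⟨t, ht⟩, hlt⟩ := hx
  refine mem_iUnion.2 ⟨⌈t⌉₊, ⟨t, ht, Nat.le_ceil t, ?_⟩⟩
  rwa [← ENNReal.lt_div_iff_mul_lt (Or.inl (measure_ball_pos volume x ht).ne')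
    (Or.inl measure_ball_lt_top.ne), ENNReal.div_eq_inv_mul]

def MuckA1With (w : ℝⁿ → ℝ) (C : ℝ) : Prop :=
  ∀ (a : ℝⁿ) (r : ℝ), 0 < r →
    ((volume (ball a r))⁻¹ * ∫⁻ x in ball a r, ENNReal.ofReal (w x)) *
      essSup (fun x => ENNReal.ofReal (w x)⁻¹) (volume.restrict (ball a r)) ≤
      ENNReal.ofReal C

theorem MuckA1With.setLIntegral_mul_wSet_le (hA : MuckA1With w C) (hw : IsWeight w)
    {g : ℝⁿ → ℝ≥0∞} (hg : Measurable g) (x : ℝⁿ) {t : ℝ} (ht : 0 < t) :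
    (∫⁻ y in ball x t, g y) * wSet w (ball x t) ≤
      ENNReal.ofReal C * volume (ball x t) * ∫⁻ y in ball x t, g y * ENNReal.ofReal (w y) := by
  set S := essSup (fun y => ENNReal.ofReal (w y)⁻¹) (volume.restrict (ball x t))
  set I := ∫⁻ y in ball x t, g y * ENNReal.ofReal (w y)
  have hwS : wSet w (ball x t) * S ≤ volume (ball x t) * ENNReal.ofReal C := by
    rw [← ENNReal.inv_mul_le_iff (measure_ball_pos volume x ht).ne' measure_ball_lt_top.ne,
      ← mul_assoc]
    exact hA x t ht
  calc (∫⁻ y in ball x t, g y) * wSet w (ball x t)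
      ≤ I * S * wSet w (ball x t) := by
        gcongr
        exact setLIntegral_le_mul_essSup_inv hw.1 hg _ (ae_restrict_of_ae hw.2.2.2)
    _ = I * (wSet w (ball x t) * S) := by ring
    _ ≤ I * (volume (ball x t) * ENNReal.ofReal C) := by gcongr
    _ = _ := by ring

theorem MuckA1With.mul_wSet_le_of_le_setLIntegral (hA : MuckA1With w C) (hw : IsWeight w)
    {g : ℝⁿ → ℝ≥0∞} (hg : Measurable g) (x : ℝⁿ) {t : ℝ} (ht : 0 < t)
    {γ : ℝ≥0∞} (hγ : γ * volume (ball x t) ≤ ∫⁻ y in ball x t, g y) :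
    γ * wSet w (ball x t) ≤
      ENNReal.ofReal C * ∫⁻ y in ball x t, g y * ENNReal.ofReal (w y) := by
  rw [← ENNReal.mul_le_mul_iff_right (measure_ball_pos volume x ht).ne' measure_ball_lt_top.ne]
  calc volume (ball x t) * (γ * wSet w (ball x t))
      = γ * volume (ball x t) * wSet w (ball x t) := by ring
    _ ≤ (∫⁻ y in ball x t, g y) * wSet w (ball x t) := by gcongr
    _ ≤ _ := hA.setLIntegral_mul_wSet_le hw hg x ht
    _ = _ := by ring

theorem MuckA1With.laverage_le (hA : MuckA1With w C) (hw : IsWeight w)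
    {g : ℝⁿ → ℝ≥0∞} (hg : Measurable g) (x : ℝⁿ) {t : ℝ} (ht : 0 < t) :
    (volume (ball x t))⁻¹ * ∫⁻ y in ball x t, g y ≤
      ENNReal.ofReal C *
        ((wSet w (ball x t))⁻¹ * ∫⁻ y in ball x t, g y * ENNReal.ofReal (w y)) := by
  rw [ENNReal.inv_mul_le_iff (measure_ball_pos volume x ht).ne' measure_ball_lt_top.ne]
  calc ∫⁻ y in ball x t, g y
      = (∫⁻ y in ball x t, g y) * wSet w (ball x t) * (wSet w (ball x t))⁻¹ := by
        rw [mul_assoc, ENNReal.mul_inv_cancel (hw.wSet_ball_pos x ht).ne'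
          (hw.wSet_ball_ne_top x t), mul_one]
    _ ≤ ENNReal.ofReal C * volume (ball x t) *
          (∫⁻ y in ball x t, g y * ENNReal.ofReal (w y)) * (wSet w (ball x t))⁻¹ :=
        mul_le_mul_left (hA.setLIntegral_mul_wSet_le hw hg x ht) _
    _ = _ := by ring

theorem MuckA1With.volume_mul_wSet_le (hA : MuckA1With w C) (hw : IsWeight w)
    {x a : ℝⁿ} {t R : ℝ} (hR : 0 < R) (hsub : ball x t ⊆ ball a R) :
    volume (ball x t) * wSet w (ball a R) ≤
      ENNReal.ofReal C * volume (ball a R) * wSet w (ball x t) := by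
  have h := hA.setLIntegral_mul_wSet_le hw (measurable_const.indicator measurableSet_ball) a hR
    (g := (ball x t).indicator 1)
  have hmul : ∀ y, (ball x t).indicator 1 y * ENNReal.ofReal (w y) =
      (ball x t).indicator (fun y => ENNReal.ofReal (w y)) y := fun y => by
    by_cases hy : y ∈ ball x t <;> simp [hy]
  simp_rw [hmul] at h
  rwa [lintegral_indicator_one measurableSet_ball, lintegral_indicator measurableSet_ball,
    Measure.restrict_restrict measurableSet_ball, inter_eq_self_of_subset_left hsub,
    Measure.restrict_apply measurableSet_ball, inter_eq_self_of_subset_left hsub] at h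

theorem MuckA1With.wSet_ball_le (hA : MuckA1With w C) (hw : IsWeight w)
    {x a : ℝⁿ} {t k : ℝ} (ht : 0 < t) (hk : 0 < k) (hsub : ball x t ⊆ ball a (k * t)) :
    wSet w (ball a (k * t)) ≤ ENNReal.ofReal C * ENNReal.ofReal k ^ n * wSet w (ball x t) := by
  have hvol : volume (ball a (k * t)) = ENNReal.ofReal k ^ n * volume (ball x t) := by
    rw [Measure.addHaar_ball_of_pos _ _ (mul_pos hk ht), Measure.addHaar_ball_of_pos _ _ ht,
      finrank_euclideanSpace_fin, mul_pow, ENNReal.ofReal_mul (by positivity),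
      ENNReal.ofReal_pow hk.le, mul_assoc]
  rw [← ENNReal.mul_le_mul_iff_right (measure_ball_pos volume x ht).ne' measure_ball_lt_top.ne]
  calc volume (ball x t) * wSet w (ball a (k * t))
      ≤ ENNReal.ofReal C * volume (ball a (k * t)) * wSet w (ball x t) :=
        hA.volume_mul_wSet_le hw (mul_pos hk ht) hsub
    _ = _ := by rw [hvol]; ring

theorem MuckA1With.wSet_ball_two_mul_two_mul_le (hA : MuckA1With w C) (hw : IsWeight w)
    {x a : ℝⁿ} {t : ℝ} (ht : 0 < t) (hsub : ball x t ⊆ ball a (2 * t)) :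
    wSet w (ball a (2 * (2 * t))) ≤ ENNReal.ofReal C * 4 ^ n * wSet w (ball x t) := by
  have h := hA.wSet_ball_le hw ht (by norm_num : (0 : ℝ) < 4)
    (hsub.trans (ball_subset_ball (by linarith)))
  rw [show (4 : ℝ) * t = 2 * (2 * t) by ring] at h
  simpa using h

theorem MuckA1With.mul_wSet_le_of_bounded_radii (hA : MuckA1With w C) (hw : IsWeight w)
    {g : ℝⁿ → ℝ≥0∞} (hg : Measurable g) (γ R : ℝ) :
    ENNReal.ofReal γ * wSet w {x | ∃ t : ℝ, 0 < t ∧ t ≤ R ∧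
        ENNReal.ofReal γ * volume (ball x t) < ∫⁻ y in ball x t, g y} ≤
      ENNReal.ofReal C * 5 ^ n * (ENNReal.ofReal C * ∫⁻ y, g y * ENNReal.ofReal (w y)) := by
  set S := {x | ∃ t : ℝ, 0 < t ∧ t ≤ R ∧
    ENNReal.ofReal γ * volume (ball x t) < ∫⁻ y in ball x t, g y}
  set K := ENNReal.ofReal C * 5 ^ n
  choose! ρ hρ₀ hρR hρ using fun x (hx : x ∈ S) => hx
  obtain ⟨u, huS, hu, hdisj, hcover⟩ :=
    exists_countable_disjoint_balls_cover S ρ R fun x hx => ⟨hρ₀ x hx, hρR x hx⟩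
  have := hu.to_subtype
  have hball : ∀ x ∈ u, ENNReal.ofReal γ * wSet w (ball x (5 * ρ x)) ≤
      K * (ENNReal.ofReal C * ∫⁻ y in ball x (ρ x), g y * ENNReal.ofReal (w y)) := by
    intro x hx
    have hρx := hρ₀ x (huS hx)
    calc ENNReal.ofReal γ * wSet w (ball x (5 * ρ x))
        ≤ ENNReal.ofReal γ * (K * wSet w (ball x (ρ x))) := by
          gcongr
          simpa using hA.wSet_ball_le hw hρx (by norm_num : (0 : ℝ) < 5)
            (ball_subset_ball (by linarith)) (x := x) (a := x)
      _ = K * (ENNReal.ofReal γ * wSet w (ball x (ρ x))) := by ring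
      _ ≤ _ := mul_le_mul_right
          (hA.mul_wSet_le_of_le_setLIntegral hw hg x hρx (hρ x (huS hx)).le) _
  calc ENNReal.ofReal γ * wSet w S
      ≤ ENNReal.ofReal γ * ∑' x : u, wSet w (ball (x : ℝⁿ) (5 * ρ x)) := by
        gcongr
        rw [biUnion_eq_iUnion] at hcover
        exact (lintegral_mono_set hcover).trans (lintegral_iUnion_le _ _)
    _ = ∑' x : u, ENNReal.ofReal γ * wSet w (ball (x : ℝⁿ) (5 * ρ x)) :=
        ENNReal.tsum_mul_left.symm
    _ ≤ ∑' x : u, K *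
          (ENNReal.ofReal C * ∫⁻ y in ball (x : ℝⁿ) (ρ x), g y * ENNReal.ofReal (w y)) :=
        ENNReal.tsum_le_tsum fun x => hball x x.2
    _ = K * (ENNReal.ofReal C *
          ∫⁻ y in ⋃ x ∈ u, ball x (ρ x), g y * ENNReal.ofReal (w y)) := by
        rw [lintegral_biUnion hu (fun _ _ => measurableSet_ball) hdisj, ENNReal.tsum_mul_left,
          ENNReal.tsum_mul_left]
    _ ≤ _ := mul_le_mul_right (mul_le_mul_right (setLIntegral_le_lintegral _ _) _) _

theorem MuckA1With.wWeakLpE_HLMax_le (hA : MuckA1With w C) (hw : IsWeight w)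
    {f : ℝⁿ → ℝ} (hf : Measurable f) (Ω : Set ℝⁿ) :
    wWeakLpE 1 w (HLMax f) Ω ≤
      ENNReal.ofReal C * 5 ^ n *
        (ENNReal.ofReal C * ∫⁻ y, ENNReal.ofReal |f y| * ENNReal.ofReal (w y)) := by
  refine wWeakLpE_one_le fun γ _ => ?_
  set E : ℕ → Set ℝⁿ := fun N => {x | ∃ t : ℝ, 0 < t ∧ t ≤ N ∧
    ENNReal.ofReal γ * volume (ball x t) < ∫⁻ y in ball x t, ENNReal.ofReal |f y|}
  have hE : Monotone E := fun N M hNM x ⟨t, ht, htN, hx⟩ =>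
    ⟨t, ht, htN.trans (Nat.cast_le.2 hNM), hx⟩
  calc ENNReal.ofReal γ * wSet w {x | x ∈ Ω ∧ ENNReal.ofReal γ < HLMax f x}
      ≤ ENNReal.ofReal γ * wSet w (⋃ N, E N) := by
        gcongr
        exact lintegral_mono_set fun x hx => setOf_lt_HLMax_subset_iUnion f γ hx.2
    _ = ⨆ N, ENNReal.ofReal γ * wSet w (E N) := by
        -- continuity from below of the measure `w dx`, valid for non-measurable sets too
        simp only [wSet, ← withDensity_apply']
        rw [hE.measure_iUnion, ENNReal.mul_iSup]
    _ ≤ _ := iSup_le fun N =>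
        hA.mul_wSet_le_of_bounded_radii hw hf.abs.ennreal_ofReal γ N

theorem MuckA1With.setLIntegral_ball_two_mul_le (hA : MuckA1With w C) (hw : IsWeight w)
    (f : ℝⁿ → ℝ) (a : ℝⁿ) {r : ℝ} (hr : 0 < r) :
    ∫⁻ y in ball a (2 * r), ENNReal.ofReal |f y| * ENNReal.ofReal (w y) ≤
      ENNReal.ofReal C * 4 ^ n * wSet w (ball a r) * (2 * weightedTail w f a r) := by
  set W := wSet w (ball a (2 * (2 * r)))
  calc ∫⁻ y in ball a (2 * r), ENNReal.ofReal |f y| * ENNReal.ofReal (w y)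
      = W * (W⁻¹ * ∫⁻ y in ball a (2 * r), ENNReal.ofReal |f y| * ENNReal.ofReal (w y)) := by
        rw [← mul_assoc, ENNReal.mul_inv_cancel (hw.wSet_ball_pos a (by positivity)).ne'
          (hw.wSet_ball_ne_top a _), one_mul]
    _ ≤ _ := mul_le_mul'
        (hA.wSet_ball_two_mul_two_mul_le hw hr (ball_subset_ball (by linarith)))
        (inv_wSet_mul_setLIntegral_le_weightedTail f a (by positivity) (by linarith))

theorem MuckA1With.wWeakLpE_HLMax_indicator_le (hA : MuckA1With w C) (hw : IsWeight w)
    {f : ℝⁿ → ℝ} (hf : Measurable f) (a : ℝⁿ) {r : ℝ} (hr : 0 < r) (Ω : Set ℝⁿ) :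
    wWeakLpE 1 w (HLMax ((ball a (2 * r)).indicator f)) Ω ≤
      2 * ENNReal.ofReal C ^ 3 * 20 ^ n * (wSet w (ball a r) * weightedTail w f a r) := by
  have hloc : ∫⁻ y, ENNReal.ofReal |(ball a (2 * r)).indicator f y| * ENNReal.ofReal (w y) =
      ∫⁻ y in ball a (2 * r), ENNReal.ofReal |f y| * ENNReal.ofReal (w y) := by
    rw [← lintegral_indicator measurableSet_ball]
    congr 1 with y
    by_cases hy : y ∈ ball a (2 * r) <;> simp [hy]
  calc wWeakLpE 1 w (HLMax ((ball a (2 * r)).indicator f)) Ω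
      ≤ ENNReal.ofReal C * 5 ^ n * (ENNReal.ofReal C *
          ∫⁻ y, ENNReal.ofReal |(ball a (2 * r)).indicator f y| * ENNReal.ofReal (w y)) :=
        hA.wWeakLpE_HLMax_le hw (hf.indicator measurableSet_ball) Ω
    _ ≤ ENNReal.ofReal C * 5 ^ n * (ENNReal.ofReal C *
          (ENNReal.ofReal C * 4 ^ n * wSet w (ball a r) * (2 * weightedTail w f a r))) := by
        rw [hloc]
        exact mul_le_mul_right (mul_le_mul_right (hA.setLIntegral_ball_two_mul_le hw f a hr) _) _
    _ = _ := by
        rw [show (20 : ℝ≥0∞) ^ n = 5 ^ n * 4 ^ n by rw [← mul_pow]; norm_num]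
        ring

theorem MuckA1With.HLMax_indicator_compl_le (hA : MuckA1With w C) (hC : 0 < C)
    (hw : IsWeight w) {f : ℝⁿ → ℝ} (hf : Measurable f) {a x : ℝⁿ} {r : ℝ}
    (hx : x ∈ ball a r) :
    HLMax ((ball a (2 * r))ᶜ.indicator f) x ≤
      2 * ENNReal.ofReal C ^ 2 * 4 ^ n * weightedTail w f a r := by
  refine iSup_le fun ⟨t, (ht : 0 < t)⟩ => ?_
  rw [mem_ball] at hx
  rcases le_or_gt t r with htr | hrt
  · have hzero : ∫⁻ y in ball x t, ENNReal.ofReal |(ball a (2 * r))ᶜ.indicator f y| = 0 := by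
      refine (setLIntegral_congr_fun measurableSet_ball fun y hy => ?_).trans lintegral_zero
      have : y ∈ ball a (2 * r) := by
        rw [mem_ball] at hy ⊢
        linarith [dist_triangle y x a]
      simp [this]
    simp [hzero]
  have hsub : ball x t ⊆ ball a (2 * t) := fun y hy => by
    rw [mem_ball] at hy ⊢
    linarith [dist_triangle y x a]
  set K := ENNReal.ofReal C * 4 ^ n
  have hK : K ≠ 0 := by simp [K, hC]
  set I := fun s => ∫⁻ y in ball a s, ENNReal.ofReal |f y| * ENNReal.ofReal (w y)
  calc (volume (ball x t))⁻¹ *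
        ∫⁻ y in ball x t, ENNReal.ofReal |(ball a (2 * r))ᶜ.indicator f y|
      ≤ (volume (ball x t))⁻¹ * ∫⁻ y in ball x t, ENNReal.ofReal |f y| := by
        refine mul_le_mul_right (lintegral_mono fun y => ?_) _
        by_cases hy : y ∈ (ball a (2 * r))ᶜ <;> simp [hy]
    _ ≤ ENNReal.ofReal C * ((wSet w (ball x t))⁻¹ *
          ∫⁻ y in ball x t, ENNReal.ofReal |f y| * ENNReal.ofReal (w y)) :=
        hA.laverage_le hw hf.abs.ennreal_ofReal x ht
    _ ≤ ENNReal.ofReal C * (K * (wSet w (ball a (2 * (2 * t))))⁻¹ * I (2 * t)) :=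
        mul_le_mul_right (mul_le_mul'
          (ENNReal.inv_le_mul_inv_of_le_mul hK (by finiteness)
            (hA.wSet_ball_two_mul_two_mul_le hw ht hsub))
          (lintegral_mono_set hsub)) _
    _ = ENNReal.ofReal C * K * ((wSet w (ball a (2 * (2 * t))))⁻¹ * I (2 * t)) := by ring
    _ ≤ ENNReal.ofReal C * K * (2 * weightedTail w f a r) :=
        mul_le_mul_right
          (inv_wSet_mul_setLIntegral_le_weightedTail f a (by positivity) (by linarith)) _
    _ = _ := by ring

end Weighted

/-- Let `w ∈ A_1`. Then there is `C > 0`, independent of `f`, `a`, `r`,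
such that for every `a ∈ ℝⁿ`, `r > 0` and `f ∈ L^{1,w}_loc`:
`‖Mf‖_{WL^{1,w}(B(a,r))} ≤ C·w(B(a,r))·∫_r^∞ w(B(a,s))⁻¹‖f‖_{L^{1,w}(B(a,s))} ds/s`. -/
theorem statement9 {n : ℕ}
    (w : EuclideanSpace ℝ (Fin n) → ℝ) (hw : IsWeight w) (hA1 : MuckA1 w) :
    ∃ C : ℝ, 0 < C ∧
      ∀ (a : EuclideanSpace ℝ (Fin n)) (r : ℝ) (f : EuclideanSpace ℝ (Fin n) → ℝ),
        0 < r → MemLocWLp 1 w f →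
        wWeakLpE 1 w (HLMax f) (ball a r) ≤
          ENNReal.ofReal C * wSet w (ball a r) *
            ∫⁻ s in Set.Ioi r,
              (wSet w (ball a s))⁻¹ * wLp 1 w f (ball a s) * ENNReal.ofReal s⁻¹ := by
  obtain ⟨C, hC, hA⟩ : ∃ C, 0 < C ∧ MuckA1With w C := hA1
  refine ⟨4 * (C ^ 3 * 20 ^ n + C ^ 2 * 4 ^ n), by positivity, fun a r f hr hf => ?_⟩
  set f₁ := (ball a (2 * r)).indicator f
  set f₂ := (ball a (2 * r))ᶜ.indicator f
  have hsplit : ∀ x ∈ ball a r, HLMax f x ≤ HLMax f₁ x + HLMax f₂ x := fun x _ => by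
    simpa only [f₁, f₂, indicator_self_add_compl] using
      HLMax_add_le (hf.1.indicator measurableSet_ball) x (f₁ := f₁) (f₂ := f₂)
  have hconst : ENNReal.ofReal (4 * (C ^ 3 * 20 ^ n + C ^ 2 * 4 ^ n)) =
      4 * (ENNReal.ofReal C ^ 3 * 20 ^ n + ENNReal.ofReal C ^ 2 * 4 ^ n) := by
    rw [ENNReal.ofReal_mul (by norm_num), ENNReal.ofReal_add (by positivity) (by positivity),
      ENNReal.ofReal_mul (by positivity), ENNReal.ofReal_mul (by positivity)]
    simp [ENNReal.ofReal_pow, hC.le]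
  calc wWeakLpE 1 w (HLMax f) (ball a r)
      ≤ 2 * (wWeakLpE 1 w (HLMax f₁) (ball a r) + wWeakLpE 1 w (HLMax f₂) (ball a r)) :=
        wWeakLpE_one_le_two_mul_add hsplit
    _ ≤ 2 * (2 * ENNReal.ofReal C ^ 3 * 20 ^ n * (wSet w (ball a r) * weightedTail w f a r) +
          2 * ENNReal.ofReal C ^ 2 * 4 ^ n * weightedTail w f a r * wSet w (ball a r)) := by
        gcongr
        · exact hA.wWeakLpE_HLMax_indicator_le hw hf.1 a hr _
        · exact wWeakLpE_one_le_of_forall_le fun x hx => hA.HLMax_indicator_compl_le hC hw hf.1 hx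
    _ = ENNReal.ofReal (4 * (C ^ 3 * 20 ^ n + C ^ 2 * 4 ^ n)) * wSet w (ball a r) *
          weightedTail w f a r := by
        rw [hconst]
        ring
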